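/- Theorem (consistency of HT at the truth level): T(⊥) is not a theorem of HT, for any choice of the enumeration (A_i) of formulas. -/
import Mathlib


/-- Propositional formulas built from variables and ⊥ using ∧, ∨, →. -/
inductive Fm : Type
  | var : ℕ → Fm
  | bot : Fm
  | and : Fm → Fm → Fm
  | or : Fm → Fm → Fm
  | imp : Fm → Fm → Fm
deriving DecidableEq

/-- ¬A is defined as A → ⊥. -/
def Fm.neg (A : Fm) : Fm := A.imp .bot

/-- Hilbert-style derivability in minimal propositional logic (intuitionistic
logic without ex falso quodlibet), extended by an extra set `Ax` of axioms. -/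
inductive Deriv (Ax : Fm → Prop) : Fm → Prop
  | ax {A} : Ax A → Deriv Ax A
  | k (A B : Fm) : Deriv Ax (A.imp (B.imp A))
  | s (A B C : Fm) : Deriv Ax ((A.imp (B.imp C)).imp ((A.imp B).imp (A.imp C)))
  | andI (A B : Fm) : Deriv Ax (A.imp (B.imp (A.and B)))
  | andE1 (A B : Fm) : Deriv Ax ((A.and B).imp A)
  | andE2 (A B : Fm) : Deriv Ax ((A.and B).imp B)
  | orI1 (A B : Fm) : Deriv Ax (A.imp (A.or B))
  | orI2 (A B : Fm) : Deriv Ax (B.imp (A.or B))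
  | orE (A B C : Fm) : Deriv Ax ((A.imp C).imp ((B.imp C).imp ((A.or B).imp C)))
  | mp {A B : Fm} : Deriv Ax (A.imp B) → Deriv Ax A → Deriv Ax B

/-- The truth axiom schemes of the system HT, for a syntactic truth operator `T`. -/
inductive HTAx (T : Fm → Fm) : Fm → Prop
  | t1 (A : Fm) : HTAx T (A.imp (T A))
  | t2a (A B : Fm) : HTAx T (((T A).and (T B)).imp (T (A.and B)))
  | t2b (A B : Fm) : HTAx T ((T (A.and B)).imp ((T A).and (T B)))
  | t3 (A B : Fm) : HTAx T (((T A).or (T B)).imp (T (A.or B)))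
  | t4 (A B C : Fm) :
      HTAx T (((T (A.or B)).and ((T (A.imp C)).and (T (B.imp C)))).imp (T C))
  | t5 (A B : Fm) : HTAx T (((T A).and (T (A.imp B))).imp (T B))

/-- Derivability in HT (with T(A) = p_{e A}). -/
def DHT (e : Fm ≃ ℕ) (A : Fm) : Prop :=
  Deriv (HTAx (fun A => Fm.var (e A))) A

/-- An Aczel-slash style realizability predicate. -/
def Slash (e : Fm ≃ ℕ) : Fm → Prop
  | .var n => DHT e (.var n) ∧ DHT e (e.symm n)
  | .bot => False
  | .and A B => Slash e A ∧ Slash e B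
  | .or A B => Slash e A ∨ Slash e B
  | .imp A B => DHT e (A.imp B) ∧ (Slash e A → Slash e B)

lemma slash_deriv (e : Fm ≃ ℕ) : ∀ A, Slash e A → DHT e A := by
  intro A
  induction A with
  | var n => exact fun h => h.1
  | bot => exact fun h => h.elim
  | and A B ihA ihB =>
      exact fun h => Deriv.mp (Deriv.mp (Deriv.andI A B) (ihA h.1)) (ihB h.2)
  | or A B ihA ihB =>
      rintro (h | h)
      · exact Deriv.mp (Deriv.orI1 A B) (ihA h)
      · exact Deriv.mp (Deriv.orI2 A B) (ihB h)
  | imp A B ihA ihB => exact fun h => h.1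

lemma slash_T (e : Fm ≃ ℕ) (A : Fm) :
    Slash e (Fm.var (e A)) ↔ (DHT e (Fm.var (e A)) ∧ DHT e A) := by
  simp [Slash, Equiv.symm_apply_apply]

lemma deriv_slash (e : Fm ≃ ℕ) : ∀ A, DHT e A → Slash e A := by
  intro A h
  induction h with
  | mp _ _ ihAB ihA => exact ihAB.2 ihA
  | k A B =>
      refine ⟨Deriv.k A B, fun hA => ⟨?_, fun _ => hA⟩⟩
      exact Deriv.mp (Deriv.k A B) (slash_deriv e A hA)
  | s A B C =>
      refine ⟨Deriv.s A B C, fun h1 => ⟨Deriv.mp (Deriv.s A B C) h1.1,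
        fun h2 => ⟨Deriv.mp (Deriv.mp (Deriv.s A B C) h1.1) h2.1,
          fun hA => ((h1.2 hA).2 (h2.2 hA))⟩⟩⟩
  | andI A B =>
      refine ⟨Deriv.andI A B, fun hA =>
        ⟨Deriv.mp (Deriv.andI A B) (slash_deriv e A hA), fun hB => ⟨hA, hB⟩⟩⟩
  | andE1 A B => exact ⟨Deriv.andE1 A B, fun h => h.1⟩
  | andE2 A B => exact ⟨Deriv.andE2 A B, fun h => h.2⟩
  | orI1 A B => exact ⟨Deriv.orI1 A B, fun h => Or.inl h⟩
  | orI2 A B => exact ⟨Deriv.orI2 A B, fun h => Or.inr h⟩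
  | orE A B C =>
      refine ⟨Deriv.orE A B C, fun h1 => ⟨Deriv.mp (Deriv.orE A B C) h1.1,
        fun h2 => ⟨Deriv.mp (Deriv.mp (Deriv.orE A B C) h1.1) h2.1, ?_⟩⟩⟩
      rintro (hA | hB)
      · exact h1.2 hA
      · exact h2.2 hB
  | ax hax =>
      cases hax with
      | t1 A =>
          refine ⟨Deriv.ax (HTAx.t1 A), fun hA => ?_⟩
          have dA : DHT e A := slash_deriv e A hA
          exact (slash_T e A).2 ⟨Deriv.mp (Deriv.ax (HTAx.t1 A)) dA, dA⟩
      | t2a A B =>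
          refine ⟨Deriv.ax (HTAx.t2a A B), fun h => ?_⟩
          obtain ⟨hTA, hTB⟩ := h
          obtain ⟨dTA, dA⟩ := (slash_T e A).1 hTA
          obtain ⟨dTB, dB⟩ := (slash_T e B).1 hTB
          refine (slash_T e (A.and B)).2 ⟨?_, ?_⟩
          · exact Deriv.mp (Deriv.ax (HTAx.t2a A B))
              (Deriv.mp (Deriv.mp (Deriv.andI _ _) dTA) dTB)
          · exact Deriv.mp (Deriv.mp (Deriv.andI A B) dA) dB
      | t2b A B =>
          refine ⟨Deriv.ax (HTAx.t2b A B), fun h => ?_⟩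
          obtain ⟨dT, dAB⟩ := (slash_T e (A.and B)).1 h
          have dTT : DHT e ((Fm.var (e A)).and (Fm.var (e B))) :=
            Deriv.mp (Deriv.ax (HTAx.t2b A B)) dT
          constructor
          · exact (slash_T e A).2 ⟨Deriv.mp (Deriv.andE1 _ _) dTT,
              Deriv.mp (Deriv.andE1 A B) dAB⟩
          · exact (slash_T e B).2 ⟨Deriv.mp (Deriv.andE2 _ _) dTT,
              Deriv.mp (Deriv.andE2 A B) dAB⟩
      | t3 A B =>
          refine ⟨Deriv.ax (HTAx.t3 A B), fun h => ?_⟩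
          rcases h with hTA | hTB
          · obtain ⟨dTA, dA⟩ := (slash_T e A).1 hTA
            exact (slash_T e (A.or B)).2
              ⟨Deriv.mp (Deriv.ax (HTAx.t3 A B)) (Deriv.mp (Deriv.orI1 _ _) dTA),
               Deriv.mp (Deriv.orI1 A B) dA⟩
          · obtain ⟨dTB, dB⟩ := (slash_T e B).1 hTB
            exact (slash_T e (A.or B)).2
              ⟨Deriv.mp (Deriv.ax (HTAx.t3 A B)) (Deriv.mp (Deriv.orI2 _ _) dTB),
               Deriv.mp (Deriv.orI2 A B) dB⟩
      | t4 A B C =>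
          refine ⟨Deriv.ax (HTAx.t4 A B C), fun h => ?_⟩
          obtain ⟨hOr, hI1, hI2⟩ := h
          obtain ⟨dTor, dor⟩ := (slash_T e (A.or B)).1 hOr
          obtain ⟨dTi1, di1⟩ := (slash_T e (A.imp C)).1 hI1
          obtain ⟨dTi2, di2⟩ := (slash_T e (B.imp C)).1 hI2
          refine (slash_T e C).2 ⟨?_, ?_⟩
          · exact Deriv.mp (Deriv.ax (HTAx.t4 A B C))
              (Deriv.mp (Deriv.mp (Deriv.andI _ _) dTor)
                (Deriv.mp (Deriv.mp (Deriv.andI _ _) dTi1) dTi2))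
          · exact Deriv.mp (Deriv.mp (Deriv.mp (Deriv.orE A B C) di1) di2) dor
      | t5 A B =>
          refine ⟨Deriv.ax (HTAx.t5 A B), fun h => ?_⟩
          obtain ⟨hTA, hTI⟩ := h
          obtain ⟨dTA, dA⟩ := (slash_T e A).1 hTA
          obtain ⟨dTI, dI⟩ := (slash_T e (A.imp B)).1 hTI
          refine (slash_T e B).2 ⟨?_, Deriv.mp dI dA⟩
          exact Deriv.mp (Deriv.ax (HTAx.t5 A B))
            (Deriv.mp (Deriv.mp (Deriv.andI _ _) dTA) dTI)

/-- Theorem 6.1: T(⊥) is not a theorem of HT, for any choice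
of the enumeration of formulas (with T(A) = p_{e A}). -/
theorem stmt16 (e : Fm ≃ ℕ) :
    ¬ Deriv (HTAx (fun A => Fm.var (e A))) (Fm.var (e Fm.bot)) := by
  intro h
  have h1 : Slash e (Fm.var (e Fm.bot)) := deriv_slash e _ h
  have h2 : DHT e Fm.bot := ((slash_T e Fm.bot).1 h1).2
  exact (deriv_slash e Fm.bot h2 : Slash e Fm.bot)
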